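/- arXiv:2309.01702 — 2 statements merged into one kernel-verified Lean document; each statement's English description precedes it below -/
import Mathlib

section
/- Let f be analytic on the polydisc D_{ρ₁,...,ρ_N} ⊂ ℂ^N, let s ∈ [1,∞)^N, let 0 < r < min(ρ₁,...,ρ_N), let α ∈ [1,∞)^N ∪ {0} and β ∈ [1,∞)^N. Then ‖f‖_{α+β,r,s} ≤ r^{λ(β)} ‖f‖_{α,r,s}, where λ(β) = β₁ + ⋯ + β_N. -/
/-- Generalized binomial coefficient `binom(α+j−1, j) = (∏_{i=0}^{j−1}(α+i))/j!`. -/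
noncomputable def genBinom (α : ℝ) (j : ℕ) : ℝ :=
  (∏ i ∈ Finset.range j, (α + i)) / (j.factorial : ℝ)

/-- Taylor coefficients of an analytic function on the polydisc `D_{ρ₁,...,ρ_N}`. -/
def AnalyticCoeffs {N : ℕ} (ρ : Fin N → ℝ) (f : (Fin N → ℕ) → ℂ) : Prop :=
  ∀ r : Fin N → ℝ, (∀ d, 0 ≤ r d) → (∀ d, r d < ρ d) →
    Summable fun J : Fin N → ℕ => ‖f J‖ * ∏ d, r d ^ J d

/-- The majorization set defining the modified Nagumo norm for `α ≠ 0`. -/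
def nagumoSet {N : ℕ} (f : (Fin N → ℕ) → ℂ) (α : Fin N → ℝ) (r : ℝ) (s : Fin N → ℝ) :
    Set ℝ :=
  {A : ℝ | 0 ≤ A ∧ ∀ J : Fin N → ℕ,
    ‖f J‖ ≤ A * ∏ d, r ^ (-(α d)) * genBinom (α d) (J d) ^ s d * (r ^ J d)⁻¹}

open Classical in
/-- The modified Nagumo norm `‖f‖_{α,r,s}`. -/
noncomputable def nagumoNorm {N : ℕ} (f : (Fin N → ℕ) → ℂ) (α : Fin N → ℝ) (r : ℝ)
    (s : Fin N → ℝ) : ℝ :=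
  if α = 0 then ∑' J : Fin N → ℕ, ‖f J‖ * r ^ (∑ d, J d)
  else sInf (nagumoSet f α r s)

/-! Since `binom(α+j−1, j)` is increasing in `α ≥ 0`, `r^{λ(β)}` times the majorant for `α + β`
dominates the one for `α`, which gives the inequality for `α ∈ [1,∞)^N`. For `α = 0`,
`‖f‖_{0,r,s} = Σ |f_J| r^{|J|}` bounds every `|f_J| r^{|J|}`, and `binom(β+j−1, j) ≥ 1`
makes `r^{λ(β)} ‖f‖_{0,r,s}` an admissible constant for the index `β`. -/

lemma genBinom_nonneg {a : ℝ} (ha : 0 ≤ a) (j : ℕ) : 0 ≤ genBinom a j := by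
  unfold genBinom
  positivity

lemma one_le_genBinom {a : ℝ} (ha : 1 ≤ a) (j : ℕ) : 1 ≤ genBinom a j := by
  rw [genBinom, one_le_div (by positivity), ← Finset.prod_range_add_one_eq_factorial]
  push_cast
  exact Finset.prod_le_prod (fun i _ => by positivity) fun i _ => by linarith

lemma genBinom_le_genBinom {a b : ℝ} (ha : 0 ≤ a) (hab : a ≤ b) (j : ℕ) :
    genBinom a j ≤ genBinom b j := by
  unfold genBinom
  gcongr

lemma rpow_sum_mul_prod_rpow_neg {ι : Type*} (t : Finset ι) {r : ℝ} (hr : 0 < r)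
    (β g : ι → ℝ) : r ^ (∑ d ∈ t, β d) * ∏ d ∈ t, r ^ (-β d) * g d = ∏ d ∈ t, g d := by
  rw [Real.rpow_sum_of_pos hr, ← Finset.prod_mul_distrib]
  refine Finset.prod_congr rfl fun d _ => ?_
  rw [← mul_assoc, ← Real.rpow_add hr, add_neg_cancel, Real.rpow_zero, one_mul]

section Nagumo

variable {N : ℕ} {f : (Fin N → ℕ) → ℂ} {r : ℝ} {s : Fin N → ℝ}

lemma nagumoNorm_zero : nagumoNorm f 0 r s = ∑' J : Fin N → ℕ, ‖f J‖ * r ^ (∑ d, J d) :=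
  if_pos rfl

lemma nagumoNorm_of_ne_zero {α : Fin N → ℝ} (hα : α ≠ 0) :
    nagumoNorm f α r s = sInf (nagumoSet f α r s) :=
  if_neg hα

lemma nagumoSet_bddBelow (α : Fin N → ℝ) : BddBelow (nagumoSet f α r s) :=
  ⟨0, fun _ hA => hA.1⟩

lemma AnalyticCoeffs.summable_mul_pow_sum {ρ : Fin N → ℝ} (hf : AnalyticCoeffs ρ f)
    (hr : 0 ≤ r) (hrρ : ∀ d, r < ρ d) :
    Summable fun J : Fin N → ℕ => ‖f J‖ * r ^ (∑ d, J d) := by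
  simpa only [Finset.prod_pow_eq_pow_sum] using hf (fun _ => r) (fun _ => hr) hrρ

lemma rpow_sum_mul_mem_nagumoSet_add (hr : 0 < r) (hs : ∀ d, 0 ≤ s d)
    {α β : Fin N → ℝ} (hα : ∀ d, 0 ≤ α d) (hβ : ∀ d, 0 ≤ β d) {A : ℝ}
    (hA : A ∈ nagumoSet f α r s) : r ^ (∑ d, β d) * A ∈ nagumoSet f (α + β) r s := by
  refine ⟨mul_nonneg (by positivity) hA.1, fun J => ?_⟩
  have hαβ : ∀ d, r ^ (-(α d + β d)) = r ^ (-β d) * r ^ (-(α d)) := fun d => by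
    rw [← Real.rpow_add hr, neg_add, add_comm]
  calc ‖f J‖ ≤ A * ∏ d, r ^ (-(α d)) * genBinom (α d) (J d) ^ s d * (r ^ J d)⁻¹ := hA.2 J
    _ ≤ A * ∏ d, r ^ (-(α d)) * genBinom (α d + β d) (J d) ^ s d * (r ^ J d)⁻¹ := by
      have hbinom : ∀ d, genBinom (α d) (J d) ^ s d ≤ genBinom (α d + β d) (J d) ^ s d :=
        fun d => Real.rpow_le_rpow (genBinom_nonneg (hα d) _)
          (genBinom_le_genBinom (hα d) (le_add_of_nonneg_right (hβ d)) _) (hs d)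
      refine mul_le_mul_of_nonneg_left (Finset.prod_le_prod (fun d _ => ?_) fun d _ => ?_) hA.1
      · have := genBinom_nonneg (hα d) (J d)
        positivity
      · exact mul_le_mul_of_nonneg_right
          (mul_le_mul_of_nonneg_left (hbinom d) (by positivity)) (by positivity)
    _ = r ^ (∑ d, β d) * A *
          ∏ d, r ^ (-((α + β) d)) * genBinom ((α + β) d) (J d) ^ s d * (r ^ J d)⁻¹ := by
      simp only [Pi.add_apply, hαβ, mul_assoc]
      rw [mul_left_comm, rpow_sum_mul_prod_rpow_neg _ hr]

lemma rpow_sum_mul_tsum_mem_nagumoSet (hr : 0 < r) (hs : ∀ d, 0 ≤ s d)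
    {γ : Fin N → ℝ} (hγ : ∀ d, 1 ≤ γ d)
    (hsum : Summable fun J : Fin N → ℕ => ‖f J‖ * r ^ (∑ d, J d)) :
    r ^ (∑ d, γ d) * ∑' J : Fin N → ℕ, ‖f J‖ * r ^ (∑ d, J d) ∈ nagumoSet f γ r s := by
  set T := ∑' J : Fin N → ℕ, ‖f J‖ * r ^ (∑ d, J d)
  have hT : 0 ≤ T := tsum_nonneg fun _ => by positivity
  refine ⟨by positivity, fun J => ?_⟩
  calc ‖f J‖ = ‖f J‖ * r ^ (∑ d, J d) * ∏ d, (r ^ J d)⁻¹ := by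
        rw [Finset.prod_inv_distrib, Finset.prod_pow_eq_pow_sum,
          mul_inv_cancel_right₀ (by positivity)]
    _ ≤ T * ∏ d, (r ^ J d)⁻¹ := by
      gcongr
      exact hsum.le_tsum J fun _ _ => by positivity
    _ ≤ T * ∏ d, genBinom (γ d) (J d) ^ s d * (r ^ J d)⁻¹ := by
      gcongr with d
      exact le_mul_of_one_le_left (by positivity)
        (Real.one_le_rpow (one_le_genBinom (hγ d) _) (hs d))
    _ = r ^ (∑ d, γ d) * T * ∏ d, r ^ (-(γ d)) * genBinom (γ d) (J d) ^ s d * (r ^ J d)⁻¹ := by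
      simp only [mul_assoc]
      rw [mul_left_comm, rpow_sum_mul_prod_rpow_neg _ hr]

end Nagumo

theorem nagumoNorm_add_index_general (N : ℕ) (ρ : Fin N → ℝ)
    (f : (Fin N → ℕ) → ℂ) (hf : AnalyticCoeffs ρ f)
    (s : Fin N → ℝ) (hs : ∀ d, 1 ≤ s d)
    (r : ℝ) (hr : 0 < r) (hrρ : ∀ d, r < ρ d)
    (α : Fin N → ℝ) (hα : (∀ d, 1 ≤ α d) ∨ α = 0)
    (β : Fin N → ℝ) (hβ : ∀ d, 1 ≤ β d) :
    nagumoNorm f (α + β) r s ≤ r ^ (∑ d, β d) * nagumoNorm f α r s := by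
  rcases isEmpty_or_nonempty (Fin N) with hN | ⟨⟨d₀⟩⟩
  · simp [Subsingleton.elim (α + β) α]
  have hs₀ : ∀ d, 0 ≤ s d := fun d => zero_le_one.trans (hs d)
  have hα₀ : ∀ d, 0 ≤ α d := by
    rcases hα with hα | rfl
    exacts [fun d => zero_le_one.trans (hα d), fun _ => le_rfl]
  have hβ₀ : ∀ d, 0 ≤ β d := fun d => zero_le_one.trans (hβ d)
  have hsum := hf.summable_mul_pow_sum hr.le hrρ
  have hαβ : α + β ≠ 0 := fun h =>
    (add_pos_of_nonneg_of_pos (hα₀ d₀) (one_pos.trans_le (hβ d₀))).ne' (congrFun h d₀)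
  rw [nagumoNorm_of_ne_zero hαβ]
  rcases hα with hα | rfl
  · have hα_ne : α ≠ 0 := fun h => (one_pos.trans_le (hα d₀)).ne' (congrFun h d₀)
    rw [nagumoNorm_of_ne_zero hα_ne, ← smul_eq_mul, ← Real.sInf_smul_of_nonneg (by positivity)]
    refine csInf_le_csInf (nagumoSet_bddBelow _)
      ((Set.nonempty_of_mem (rpow_sum_mul_tsum_mem_nagumoSet hr hs₀ hα hsum)).smul_set) ?_
    rintro _ ⟨A, hA, rfl⟩
    exact rpow_sum_mul_mem_nagumoSet_add hr hs₀ hα₀ hβ₀ hA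
  · rw [nagumoNorm_zero, zero_add]
    exact csInf_le (nagumoSet_bddBelow _) (rpow_sum_mul_tsum_mem_nagumoSet hr hs₀ hβ hsum)

/-- For `f` analytic on `D_{ρ₁,...,ρ_N}`, `s ∈ [1,∞)^N`, `0 < r < min(ρ₁,...,ρ_N)`,
`α ∈ [1,∞)^N ∪ {0}` and `β ∈ [1,∞)^N`:
`‖f‖_{α+β,r,s} ≤ r^{λ(β)} · ‖f‖_{α,r,s}`, where `λ(β) = β₁ + ⋯ + β_N`. -/
theorem nagumoNorm_add_index (N : ℕ) (ρ : Fin N → ℝ) (hρ : ∀ d, 0 < ρ d)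
    (f : (Fin N → ℕ) → ℂ) (hf : AnalyticCoeffs ρ f)
    (s : Fin N → ℝ) (hs : ∀ d, 1 ≤ s d)
    (r : ℝ) (hr : 0 < r) (hrρ : ∀ d, r < ρ d)
    (α : Fin N → ℝ) (hα : (∀ d, 1 ≤ α d) ∨ α = 0)
    (β : Fin N → ℝ) (hβ : ∀ d, 1 ≤ β d) :
    nagumoNorm f (α + β) r s ≤ r ^ (∑ d, β d) * nagumoNorm f α r s :=
  nagumoNorm_add_index_general N ρ f hf s hs r hr hrρ α hα β hβ
end

section
/- Assume m₁, ..., m_N are regular moment sequences of respective orders s₁, ..., s_N > 0, and write ∂_{m;x}^q = ∂_{m₁;x₁}^{q₁} ⋯ ∂_{m_N;x_N}^{q_N} for q ∈ ℕ^N. Then for all α ∈ [1,∞)^N and all q ∈ ℕ^N there exists a constant C > 0 (depending only on m₁,...,m_N) such that for every f analytic on D_{ρ₁,...,ρ_N} and every 0 < r < min(ρ₁,...,ρ_N): ‖∂_{m;x}^q f‖_{α+q,r,s} ≤ C^{λ(q)} · ( ∏_{d=1}^N q_d!^{s_d} · binom(α_d+q_d−1, q_d)^{s_d} ) · ‖f‖_{α,r,s},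 where λ(q) = q₁+⋯+q_N and the d-th factor is interpreted as 1 when q_d = 0. -/
/-- A regular moment sequence of order `s > 0`. -/
def IsRegularMomentSeq (m : ℕ → ℝ) (s : ℝ) : Prop :=
  m 0 = 1 ∧ (∀ j, 0 < m j) ∧
    ∃ a A : ℝ, 0 < a ∧ 0 < A ∧ ∀ j : ℕ,
      a * ((j : ℝ) + 1) ^ s ≤ m (j + 1) / m j ∧ m (j + 1) / m j ≤ A * ((j : ℝ) + 1) ^ s

/-- The iterated moment derivative `∂_{m;x}^q = ∂_{m₁;x₁}^{q₁} ⋯ ∂_{m_N;x_N}^{q_N}`, acting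
coefficientwise: the coefficient of `x^J` in `∂_{m;x}^q f` is
`f_{J+q} · ∏_d m_d(J_d+q_d)/m_d(J_d)`. -/
noncomputable def momentDerivQ {N : ℕ} (m : Fin N → ℕ → ℝ) (q : Fin N → ℕ)
    (f : (Fin N → ℕ) → ℂ) : (Fin N → ℕ) → ℂ :=
  fun J => f (J + q) * ((∏ d, m d (J d + q d) / m d (J d) : ℝ) : ℂ)

/-!
Coefficientwise, `∂^q` shifts the index `J` by `q` and multiplies by
`∏_d m_d(J_d+q_d)/m_d(J_d)`, which telescopes to at most `C^{q_d} ((J_d+1)⋯(J_d+q_d))^{s_d}`.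
The identity `binom(α+J+q−1, J+q) · (J+1)⋯(J+q) = q! · binom(α+q−1, q) · binom(α+q+J−1, J)`
then turns every majorant constant `B` of `f` for the weight `α` into the majorant constant
`C^{λ(q)} ∏_d q_d!^{s_d} binom(α_d+q_d−1, q_d)^{s_d} · B` of `∂^q f` for the weight `α+q`, and
taking infima gives the bound. Analyticity only serves to make the set of majorant constants of
`f` nonempty, so that its infimum is not the junk value `sInf ∅ = 0`.
-/

open Finset Real

lemma genBinom_nonneg_s9 {α : ℝ} (hα : 0 ≤ α) (j : ℕ) : 0 ≤ genBinom α j :=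
  div_nonneg (prod_nonneg fun _ _ => by positivity) (Nat.cast_nonneg _)

lemma one_le_genBinom_s9 {α : ℝ} (hα : 1 ≤ α) (j : ℕ) : 1 ≤ genBinom α j := by
  rw [genBinom, le_div_iff₀ (by exact_mod_cast j.factorial_pos), one_mul,
    ← prod_range_add_one_eq_factorial]
  push_cast
  exact prod_le_prod (fun i _ => by positivity) fun i _ => by linarith

lemma genBinom_add_mul_ascFactorial (α : ℝ) (J q : ℕ) :
    genBinom α (J + q) * ((J + 1).ascFactorial q : ℝ) =
      q.factorial * genBinom α q * genBinom (α + q) J := by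
  have hsplit : ∏ i ∈ range (J + q), (α + i) =
      (∏ i ∈ range q, (α + i)) * ∏ i ∈ range J, (α + q + i) := by
    rw [add_comm J q, prod_range_add]
    exact congrArg _ (prod_congr rfl fun i _ => by push_cast; ring)
  have hfact : ((J + q).factorial : ℝ) = J.factorial * (J + 1).ascFactorial q := by
    exact_mod_cast (J.factorial_mul_ascFactorial q).symm
  have hJ : (J.factorial : ℝ) ≠ 0 := by positivity
  have hq : (q.factorial : ℝ) ≠ 0 := by positivity
  have hasc : ((J + 1).ascFactorial q : ℝ) ≠ 0 := by
    exact_mod_cast (Nat.ascFactorial_pos _ _).ne'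
  rw [genBinom, genBinom, genBinom, hsplit, hfact]
  field_simp

lemma div_le_pow_mul_ascFactorial_rpow {m : ℕ → ℝ} {s C : ℝ} (hm : ∀ j, 0 < m j)
    (hC : ∀ j : ℕ, m (j + 1) / m j ≤ C * ((j : ℝ) + 1) ^ s) (J q : ℕ) :
    m (J + q) / m J ≤ C ^ q * ((J + 1).ascFactorial q : ℝ) ^ s := by
  induction q with
  | zero => simp [div_self (hm J).ne']
  | succ q ih =>
    have htel : m (J + (q + 1)) / m J = m (J + q) / m J * (m (J + q + 1) / m (J + q)) := by
      rw [div_mul_div_comm, mul_comm (m (J + q)), mul_div_mul_right _ _ (hm _).ne', add_assoc]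
    have hstep := hC (J + q)
    rw [htel, Nat.ascFactorial_succ, Nat.cast_mul,
      mul_rpow (by positivity) (by positivity), pow_succ]
    calc m (J + q) / m J * (m (J + q + 1) / m (J + q))
        ≤ C ^ q * ((J + 1).ascFactorial q : ℝ) ^ s * (C * ((J + q : ℕ) + 1 : ℝ) ^ s) :=
          mul_le_mul ih hstep (div_pos (hm _) (hm _)).le
            ((div_pos (hm _) (hm _)).le.trans ih)
      _ = _ := by push_cast; ring_nf

lemma genBinom_add_rpow_mul_div_le {m : ℕ → ℝ} {s C α : ℝ} (hα : 0 ≤ α) (hm : ∀ j, 0 < m j)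
    (hC : ∀ j : ℕ, m (j + 1) / m j ≤ C * ((j : ℝ) + 1) ^ s) (J q : ℕ) :
    genBinom α (J + q) ^ s * (m (J + q) / m J) ≤
      C ^ q * ((q.factorial : ℝ) ^ s * genBinom α q ^ s) * genBinom (α + q) J ^ s := by
  have hbinom := genBinom_nonneg_s9 hα
  calc genBinom α (J + q) ^ s * (m (J + q) / m J)
      ≤ genBinom α (J + q) ^ s * (C ^ q * ((J + 1).ascFactorial q : ℝ) ^ s) :=
        mul_le_mul_of_nonneg_left (div_le_pow_mul_ascFactorial_rpow hm hC J q)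
          (rpow_nonneg (hbinom _) s)
    _ = C ^ q * (genBinom α (J + q) * (J + 1).ascFactorial q) ^ s := by
        rw [mul_rpow (hbinom _) (Nat.cast_nonneg _)]; ring
    _ = C ^ q * ((q.factorial : ℝ) ^ s * genBinom α q ^ s) * genBinom (α + q) J ^ s := by
        rw [genBinom_add_mul_ascFactorial,
          mul_rpow (mul_nonneg (Nat.cast_nonneg _) (hbinom _)) (genBinom_nonneg_s9 (by positivity) _),
          mul_rpow (Nat.cast_nonneg _) (hbinom _)]
        ring

/-- The coefficient of `x ^ j` in the majorant `r ^ (-α) * Θ_{α,s}(x / r)`. -/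
noncomputable def nagumoWeight (α r s : ℝ) (j : ℕ) : ℝ :=
  r ^ (-α) * genBinom α j ^ s * (r ^ j)⁻¹

lemma mem_nagumoSet_iff {N : ℕ} {f : (Fin N → ℕ) → ℂ} {α : Fin N → ℝ} {r : ℝ}
    {s : Fin N → ℝ} {B : ℝ} :
    B ∈ nagumoSet f α r s ↔
      0 ≤ B ∧ ∀ J, ‖f J‖ ≤ B * ∏ d, nagumoWeight (α d) r (s d) (J d) :=
  Iff.rfl

lemma nagumoWeight_nonneg {α r : ℝ} (hα : 0 ≤ α) (hr : 0 < r) (s : ℝ) (j : ℕ) :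
    0 ≤ nagumoWeight α r s j := by
  have := genBinom_nonneg_s9 hα j
  unfold nagumoWeight; positivity

lemma nagumoWeight_add_mul_div_le {m : ℕ → ℝ} {s C α r : ℝ} (hα : 0 ≤ α) (hr : 0 < r)
    (hm : ∀ j, 0 < m j) (hC : ∀ j : ℕ, m (j + 1) / m j ≤ C * ((j : ℝ) + 1) ^ s) (J q : ℕ) :
    nagumoWeight α r s (J + q) * (m (J + q) / m J) ≤
      C ^ q * ((q.factorial : ℝ) ^ s * genBinom α q ^ s) * nagumoWeight (α + q) r s J := by
  have hshift : r ^ (-α) * (r ^ (J + q))⁻¹ = r ^ (-(α + q)) * (r ^ J)⁻¹ := by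
    rw [neg_add, rpow_add hr, rpow_neg hr.le (q : ℝ), rpow_natCast, pow_add, mul_inv]
    ring
  calc nagumoWeight α r s (J + q) * (m (J + q) / m J)
      = r ^ (-α) * (r ^ (J + q))⁻¹ * (genBinom α (J + q) ^ s * (m (J + q) / m J)) := by
        unfold nagumoWeight; ring
    _ ≤ r ^ (-α) * (r ^ (J + q))⁻¹ *
          (C ^ q * ((q.factorial : ℝ) ^ s * genBinom α q ^ s) * genBinom (α + q) J ^ s) :=
        mul_le_mul_of_nonneg_left (genBinom_add_rpow_mul_div_le hα hm hC J q) (by positivity)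
    _ = _ := by rw [hshift, nagumoWeight]; ring

lemma exists_uniform_ratio_bound {N : ℕ} {m : Fin N → ℕ → ℝ} {s : Fin N → ℝ}
    (hm : ∀ d, IsRegularMomentSeq (m d) (s d)) :
    ∃ C : ℝ, 0 < C ∧ ∀ d j, m d (j + 1) / m d j ≤ C * ((j : ℝ) + 1) ^ s d := by
  choose _ A _ hA hbound using fun d => (hm d).2.2
  have hsum : 0 ≤ ∑ d, A d := sum_nonneg fun d _ => (hA d).le
  refine ⟨1 + ∑ d, A d, by linarith, fun d j => (hbound d j).2.trans ?_⟩
  have hAd : A d ≤ ∑ d, A d := single_le_sum (fun d _ => (hA d).le) (mem_univ d)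
  exact mul_le_mul_of_nonneg_right (by linarith) (by positivity)

lemma momentDerivQ_zero {N : ℕ} {m : Fin N → ℕ → ℝ} (hm : ∀ d j, m d j ≠ 0)
    (f : (Fin N → ℕ) → ℂ) : momentDerivQ m 0 f = f := by
  ext J
  simp [momentDerivQ, hm]

lemma nagumoSet_nonempty {N : ℕ} {f : (Fin N → ℕ) → ℂ} {α s : Fin N → ℝ} {r : ℝ}
    (hα : ∀ d, 1 ≤ α d) (hs : ∀ d, 0 ≤ s d) (hr : 0 < r)
    (hf : Summable fun J : Fin N → ℕ => ‖f J‖ * ∏ d, r ^ J d) :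
    (nagumoSet f α r s).Nonempty := by
  set M := ∑' J : Fin N → ℕ, ‖f J‖ * ∏ d, r ^ J d
  have hM : 0 ≤ M := tsum_nonneg fun J => by positivity
  refine ⟨M * ∏ d, r ^ α d, by positivity, fun J => ?_⟩
  have hrJ : 0 < ∏ d, r ^ J d := by positivity
  calc ‖f J‖ ≤ M * ∏ d, (r ^ J d)⁻¹ := by
        rw [prod_inv_distrib, ← div_eq_mul_inv, le_div_iff₀ hrJ]
        exact hf.le_tsum J fun _ _ => by positivity
    _ ≤ M * ∏ d, genBinom (α d) (J d) ^ s d * (r ^ J d)⁻¹ := by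
        gcongr with d
        exact le_mul_of_one_le_left (by positivity) (one_le_rpow (one_le_genBinom_s9 (hα d) _) (hs d))
    _ = (M * ∏ d, r ^ α d) * ∏ d, r ^ (-α d) * genBinom (α d) (J d) ^ s d * (r ^ J d)⁻¹ := by
        rw [mul_assoc, ← prod_mul_distrib]
        congr 1
        refine prod_congr rfl fun d _ => ?_
        rw [← mul_assoc, ← mul_assoc, ← rpow_add hr, add_neg_cancel, rpow_zero, one_mul]

lemma prod_factorial_rpow_mul_genBinom_rpow_nonneg {N : ℕ} {α : Fin N → ℝ} (hα : ∀ d, 0 ≤ α d)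
    (s : Fin N → ℝ) (q : Fin N → ℕ) :
    0 ≤ ∏ d, ((q d).factorial : ℝ) ^ s d * genBinom (α d) (q d) ^ s d :=
  prod_nonneg fun d _ =>
    mul_nonneg (rpow_nonneg (Nat.cast_nonneg _) _) (rpow_nonneg (genBinom_nonneg_s9 (hα d) _) _)

lemma mul_mem_nagumoSet_momentDerivQ {N : ℕ} {m : Fin N → ℕ → ℝ} {s α : Fin N → ℝ} {C r B : ℝ}
    {f : (Fin N → ℕ) → ℂ} (hm : ∀ d j, 0 < m d j)
    (hC : ∀ d j, m d (j + 1) / m d j ≤ C * ((j : ℝ) + 1) ^ s d) (hC0 : 0 ≤ C)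
    (hα : ∀ d, 0 ≤ α d) (hr : 0 < r) (q : Fin N → ℕ) (hB : B ∈ nagumoSet f α r s) :
    (C ^ (∑ d, q d) * ∏ d, ((q d).factorial : ℝ) ^ s d * genBinom (α d) (q d) ^ s d) * B ∈
      nagumoSet (momentDerivQ m q f) (α + fun d => (q d : ℝ)) r s := by
  rw [mem_nagumoSet_iff] at hB ⊢
  obtain ⟨hB0, hBf⟩ := hB
  have hfactor := prod_factorial_rpow_mul_genBinom_rpow_nonneg hα s q
  refine ⟨by positivity, fun J => ?_⟩
  have hratio : 0 ≤ ∏ d, m d (J d + q d) / m d (J d) :=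
    prod_nonneg fun d _ => (div_pos (hm _ _) (hm _ _)).le
  calc ‖momentDerivQ m q f J‖
      = ‖f (J + q)‖ * ∏ d, m d (J d + q d) / m d (J d) := by
        rw [momentDerivQ, norm_mul, Complex.norm_real, norm_of_nonneg hratio]
    _ ≤ B * ∏ d, nagumoWeight (α d) r (s d) (J d + q d) * (m d (J d + q d) / m d (J d)) := by
        rw [prod_mul_distrib, ← mul_assoc]
        exact mul_le_mul_of_nonneg_right (hBf (J + q)) hratio
    _ ≤ B * ∏ d, C ^ q d * (((q d).factorial : ℝ) ^ s d * genBinom (α d) (q d) ^ s d) *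
          nagumoWeight (α d + q d) r (s d) (J d) := by
        refine mul_le_mul_of_nonneg_left (prod_le_prod (fun d _ => ?_) fun d _ => ?_) hB0
        · exact mul_nonneg (nagumoWeight_nonneg (hα d) hr _ _) (div_pos (hm _ _) (hm _ _)).le
        · exact nagumoWeight_add_mul_div_le (hα d) hr (hm d) (hC d) (J d) (q d)
    _ = _ := by
        rw [prod_mul_distrib, prod_mul_distrib, prod_pow_eq_pow_sum]
        simp only [Pi.add_apply]
        ring

lemma sInf_le_mul_sInf_of_mul_mem {S T : Set ℝ} {K : ℝ} (hK : 0 ≤ K) (hS : BddBelow S)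
    (hT : T.Nonempty) (h : ∀ B ∈ T, K * B ∈ S) : sInf S ≤ K * sInf T := by
  rw [← smul_eq_mul, ← Real.sInf_smul_of_nonneg hK]
  exact csInf_le_csInf hS hT.smul_set (Set.smul_set_subset_iff.2 h)

/-- If `m₁, ..., m_N` are regular moment sequences of orders `s₁, ..., s_N > 0`, then for all
`α ∈ [1,∞)^N` and `q ∈ ℕ^N` there is `C > 0` (depending only on `m₁,...,m_N`) such that
`‖∂_{m;x}^q f‖_{α+q,r,s} ≤ C^{λ(q)} · (∏_d q_d!^{s_d} · binom(α_d+q_d−1,q_d)^{s_d}) · ‖f‖_{α,r,s}`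
for every `f` analytic on `D_{ρ₁,...,ρ_N}` and every `0 < r < min(ρ₁,...,ρ_N)`. -/
theorem nagumoNorm_momentDerivQ (N : ℕ) (s : Fin N → ℝ) (hs : ∀ d, 0 < s d)
    (m : Fin N → ℕ → ℝ) (hm : ∀ d, IsRegularMomentSeq (m d) (s d))
    (α : Fin N → ℝ) (hα : ∀ d, 1 ≤ α d) (q : Fin N → ℕ) :
    ∃ C : ℝ, 0 < C ∧
      ∀ (ρ : Fin N → ℝ), (∀ d, 0 < ρ d) →
      ∀ f : (Fin N → ℕ) → ℂ, AnalyticCoeffs ρ f →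
      ∀ r : ℝ, 0 < r → (∀ d, r < ρ d) →
        nagumoNorm (momentDerivQ m q f) (α + fun d => (q d : ℝ)) r s ≤
          C ^ (∑ d, q d) *
            (∏ d, ((q d).factorial : ℝ) ^ s d * genBinom (α d) (q d) ^ s d) *
            nagumoNorm f α r s := by
  obtain ⟨C, hC0, hC⟩ := exists_uniform_ratio_bound hm
  have hmpos d := (hm d).2.1
  refine ⟨C, hC0, fun ρ _ f hf r hr hrρ => ?_⟩
  rcases N.eq_zero_or_pos with rfl | hN
  · obtain rfl : q = 0 := Subsingleton.elim _ _
    rw [momentDerivQ_zero fun d j => (hmpos d j).ne', show (α + _) = α from Subsingleton.elim _ _]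
    simp
  have hne (β : Fin N → ℝ) (hβ : ∀ d, 1 ≤ β d) : β ≠ 0 := fun h =>
    absurd (hβ ⟨0, hN⟩) (by simp [h])
  have hαq d : 1 ≤ (α + fun d => (q d : ℝ)) d := le_add_of_le_of_nonneg (hα d) (Nat.cast_nonneg _)
  have hα0 d : 0 ≤ α d := zero_le_one.trans (hα d)
  rw [nagumoNorm, nagumoNorm, if_neg (hne _ hαq), if_neg (hne α hα)]
  exact sInf_le_mul_sInf_of_mul_mem
    (mul_nonneg (pow_nonneg hC0.le _) (prod_factorial_rpow_mul_genBinom_rpow_nonneg hα0 s q))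
    ⟨0, fun _ hB => hB.1⟩
    (nagumoSet_nonempty hα (fun d => (hs d).le) hr (hf _ (fun _ => hr.le) hrρ))
    fun B hB => mul_mem_nagumoSet_momentDerivQ hmpos hC hC0.le hα0 hr q hB
end
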